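/- arXiv:2402.18984 — 9 statements merged into one kernel-verified Lean document; each statement's English description precedes it below -/
import Mathlib

section
/- Let k ≥ 2 be an integer and let G be a finite connected P_k-free simple graph on n vertices. If k < 2⌈√n⌉ − 1, then b(G) ≤ ⌈√n⌉ (that is, the burning number conjecture holds for G). -/
/-!
A connected graph in which every vertex has eccentricity greater than `r` contains an induced path
on `2r` vertices. Remove a vertex `v` that leaves `G` connected. If `G - v` still has radius
greater than `r`, induct; otherwise a center `c` of `G - v` is at distance `r + 1` from `v` and
within `r` of every other vertex. A geodesic from `v` to `c`, continued by a geodesic from `c` to a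
vertex `x` far from the `(r - 1)`-st vertex of the first one (skipping `c` if there is a chord),
is then an induced path on at least `2r` vertices.

So a connected `P_k`-free graph with `k ≤ 2(⌈√n⌉ - 1)` has a vertex within `⌈√n⌉ - 1` of all
others, and lighting that vertex `⌈√n⌉` times burns the graph.
-/

open SimpleGraph

/-- `b` is a burning sequence of length `k` for `G`: the source `b i` is burned at time `i + 1`
(for `i : Fin k`), and every vertex must be within distance `k - (i + 1)` of some source `b i`
(expressed via the existence of a short enough walk, so that unreachable vertices are never
considered burned). -/
def IsBurningSeq {V : Type*} (G : SimpleGraph V) {k : ℕ} (b : Fin k → V) : Prop :=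
  ∀ v : V, ∃ i : Fin k, ∃ w : G.Walk v (b i), w.length + (i : ℕ) + 1 ≤ k

/-- The burning number of `G`: the least `k` admitting a burning sequence of length `k`. -/
noncomputable def burningNumber {V : Type*} (G : SimpleGraph V) : ℕ :=
  sInf {k : ℕ | ∃ b : Fin k → V, IsBurningSeq G b}

namespace SimpleGraph

variable {V W : Type*} {G : SimpleGraph V} {u v : V}

lemma Reachable.dist_map_le {G' : SimpleGraph W} (f : G →g G') (h : G.Reachable u v) :
    G'.dist (f u) (f v) ≤ G.dist u v := by
  obtain ⟨p, hp⟩ := h.exists_walk_length_eq_dist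
  rw [← hp, ← p.length_map f]
  exact dist_le _

namespace Walk

lemma dist_getVert_le_sub (p : G.Walk u v) {i j : ℕ} (hij : i ≤ j) :
    G.dist (p.getVert i) (p.getVert j) ≤ j - i := by
  obtain ⟨m, rfl⟩ := Nat.exists_eq_add_of_le hij
  have h := G.dist_le ((p.drop i).take m)
  rw [take_length, drop_getVert] at h
  omega

variable {p : G.Walk u v}

lemma dist_getVert_end_of_length_eq_dist (hp : p.length = G.dist u v) (i : ℕ) :
    G.dist (p.getVert i) v = p.length - i := by
  by_cases hi : i ≤ p.length
  · have hend := p.dist_getVert_le_sub hi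
    have htri := (p.take i).reachable.dist_triangle_left v
    have hstart := p.dist_getVert_le_sub (Nat.zero_le i)
    rw [getVert_length] at hend
    rw [getVert_zero] at hstart
    omega
  · rw [p.getVert_of_length_le (by omega), dist_self]
    omega

lemma dist_start_getVert_of_length_eq_dist (hp : p.length = G.dist u v) {i : ℕ}
    (hi : i ≤ p.length) : G.dist u (p.getVert i) = i := by
  have hend := dist_getVert_end_of_length_eq_dist hp i
  have htri := (p.take i).reachable.dist_triangle_left v
  have hstart := p.dist_getVert_le_sub (Nat.zero_le i)
  rw [getVert_zero] at hstart
  omega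

end Walk

/-- `f 0, …, f (n - 1)` is an induced path of `G`; `2 ≤ G.dist` encodes "distinct and not
adjacent". -/
def IsInducedPath (G : SimpleGraph V) (f : ℕ → V) (n : ℕ) : Prop :=
  (∀ a, a + 1 < n → G.Adj (f a) (f (a + 1))) ∧ ∀ a b, b < n → a + 2 ≤ b → 2 ≤ G.dist (f a) (f b)

namespace IsInducedPath

variable {f : ℕ → V} {n : ℕ}

lemma mono (hf : G.IsInducedPath f n) {m : ℕ} (hmn : m ≤ n) : G.IsInducedPath f m :=
  ⟨fun a ha => hf.1 a (by omega), fun a b hb hab => hf.2 a b (by omega) hab⟩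

lemma adj_iff (hf : G.IsInducedPath f n) {a b : ℕ} (hab : a < b) (hb : b < n) :
    f a ≠ f b ∧ (G.Adj (f a) (f b) ↔ b = a + 1) := by
  obtain rfl | hab := (Nat.succ_le_of_lt hab).eq_or_lt
  · have hadj := hf.1 a hb
    exact ⟨hadj.ne, iff_of_true hadj rfl⟩
  · have hdist := hf.2 a b hb hab
    refine ⟨fun h => ?_, iff_of_false (fun h => ?_) (by omega)⟩
    · rw [h, dist_self] at hdist
      omega
    · rw [dist_eq_one_iff_adj.mpr h] at hdist
      omega

lemma nonempty_embedding (hf : G.IsInducedPath f n) : Nonempty (pathGraph n ↪g G) := by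
  have hinj : Function.Injective fun a : Fin n => f a := by
    intro a b hab
    rcases lt_trichotomy a.val b.val with h | h | h
    · exact absurd hab (hf.adj_iff h b.isLt).1
    · exact Fin.ext h
    · exact absurd hab.symm (hf.adj_iff h a.isLt).1
  refine ⟨⟨⟨_, hinj⟩, fun {a b} => ?_⟩⟩
  show G.Adj (f a) (f b) ↔ (pathGraph n).Adj a b
  rw [pathGraph_adj]
  rcases lt_trichotomy a.val b.val with h | h | h
  · rw [(hf.adj_iff h b.isLt).2]
    omega
  · rw [Fin.ext h]
    simp only [SimpleGraph.irrefl, false_iff]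
    omega
  · rw [adj_comm, (hf.adj_iff h a.isLt).2]
    omega

lemma append {g d : ℕ → V} {m : ℕ} (hg : G.IsInducedPath g (m + 1)) (hd : G.IsInducedPath d n)
    (hjoin : G.Adj (g m) (d 0))
    (hcross : ∀ i j, i ≤ m → j < n → (i < m ∨ 0 < j) → 2 ≤ G.dist (g i) (d j)) :
    G.IsInducedPath (fun a => if a ≤ m then g a else d (a - (m + 1))) (m + 1 + n) := by
  refine ⟨fun a ha => ?_, fun a b hb hab => ?_⟩ <;> dsimp only
  · rcases Nat.lt_trichotomy a m with h | rfl | h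
    · rw [if_pos h.le, if_pos (Nat.succ_le_of_lt h)]
      exact hg.1 a (by omega)
    · simpa using hjoin
    · rw [if_neg (by omega), if_neg (by omega), show a + 1 - (m + 1) = a - (m + 1) + 1 by omega]
      exact hd.1 _ (by omega)
  · by_cases hbm : b ≤ m
    · rw [if_pos (by omega), if_pos hbm]
      exact hg.2 a b (by omega) hab
    by_cases ham : a ≤ m
    · rw [if_pos ham, if_neg hbm]
      exact hcross a _ ham (by omega) (by omega)
    · rw [if_neg ham, if_neg hbm]
      exact hd.2 _ _ (by omega) (by omega)

end IsInducedPath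

lemma Walk.isInducedPath_getVert {p : G.Walk u v} (hp : p.length = G.dist u v) :
    G.IsInducedPath p.getVert (p.length + 1) := by
  refine ⟨fun a ha => p.adj_getVert_succ (by omega), fun a b hb hab => ?_⟩
  have hua := p.dist_start_getVert_of_length_eq_dist hp (i := a) (by omega)
  have hub := p.dist_start_getVert_of_length_eq_dist hp (i := b) (by omega)
  have htri := (p.take a).reachable.dist_triangle_left (p.getVert b)
  omega

lemma nonempty_pathGraph_embedding_of_almost_center (hconn : G.Connected) {r : ℕ} (hr : 0 < r)
    (hfar : ∀ u, ∃ y, r < G.dist u y) {v c : V} (hvc : G.dist v c = r + 1)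
    (hc : ∀ x, x ≠ v → G.dist c x ≤ r) : Nonempty (pathGraph (2 * r) ↪g G) := by
  obtain ⟨p, hp⟩ := hconn.exists_walk_length_eq_dist v c
  have hplen : p.length = r + 1 := hp.trans hvc
  have hpv : ∀ i ≤ r + 1, G.dist v (p.getVert i) = i ∧ G.dist (p.getVert i) c = r + 1 - i :=
    fun i hi => ⟨p.dist_start_getVert_of_length_eq_dist hp (by omega),
      hplen ▸ p.dist_getVert_end_of_length_eq_dist hp i⟩
  obtain ⟨x, hx⟩ := hfar (p.getVert (r - 1))
  have hxv : x ≠ v := by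
    rintro rfl
    have := (hpv (r - 1) (by omega)).1
    rw [dist_comm] at this
    omega
  obtain ⟨q, hq⟩ := hconn.exists_walk_length_eq_dist c x
  have hcx : r - 1 ≤ G.dist c x ∧ G.dist c x ≤ r := by
    have := hconn.dist_triangle (u := p.getVert (r - 1)) (v := c) (w := x)
    have := (hpv (r - 1) (by omega)).2
    exact ⟨by omega, hc x hxv⟩
  have hqc : ∀ j ≤ G.dist c x,
      G.dist c (q.getVert j) = j ∧ G.dist (q.getVert j) x = G.dist c x - j :=
    fun j hj => ⟨q.dist_start_getVert_of_length_eq_dist hq (by omega),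
      hq ▸ q.dist_getVert_end_of_length_eq_dist hq j⟩
  -- `p.getVert i` close to `q.getVert j` would give a short route from `v` to `c`
  -- or from `p.getVert (r - 1)` to `x`.
  have hpq : ∀ i j, i ≤ r → 1 ≤ j → j ≤ G.dist c x →
      1 ≤ G.dist (p.getVert i) (q.getVert j) ∧
        (i < r ∨ 2 ≤ j → 2 ≤ G.dist (p.getVert i) (q.getVert j)) := by
    intro i j hi hj hjx
    have hwi : G.dist (p.getVert (r - 1)) (p.getVert i) + i ≤ r - 1 ∨
        i = r ∧ G.dist (p.getVert (r - 1)) (p.getVert i) ≤ 1 := by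
      rcases Nat.lt_or_ge i r with h | h
      · have := p.dist_getVert_le_sub (i := i) (j := r - 1) (by omega)
        rw [dist_comm] at this
        omega
      · have := p.dist_getVert_le_sub (i := r - 1) (j := i) (by omega)
        omega
    have h1 := hconn.dist_triangle (u := v) (v := q.getVert j) (w := c)
    have h2 := hconn.dist_triangle (u := v) (v := p.getVert i) (w := q.getVert j)
    have h3 := hconn.dist_triangle (u := p.getVert (r - 1)) (v := p.getVert i) (w := x)
    have h4 := hconn.dist_triangle (u := p.getVert i) (v := q.getVert j) (w := x)
    have := hpv i (by omega)
    have := hqc j hjx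
    rw [dist_comm (u := q.getVert j)] at h1
    exact ⟨by omega, fun _ => by omega⟩
  -- The path runs along `p` and continues along `q`, skipping `c` when `p.getVert r ~ q.getVert 1`.
  obtain ⟨t, ht, hjoin, hskip⟩ : ∃ t ≤ 1, G.Adj (p.getVert r) (q.getVert t) ∧
      (t = 0 → ¬ G.Adj (p.getVert r) (q.getVert 1)) := by
    by_cases hchord : G.Adj (p.getVert r) (q.getVert 1)
    · exact ⟨1, le_rfl, hchord, by simp⟩
    · have hpc : p.getVert (r + 1) = c := hplen ▸ p.getVert_length
      exact ⟨0, zero_le_one,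
        by simpa [hpc] using p.adj_getVert_succ (i := r) (by omega), fun _ => hchord⟩
  have hpath : G.IsInducedPath p.getVert (r + 1) := (p.isInducedPath_getVert hp).mono (by omega)
  have hqpath : G.IsInducedPath (q.drop t).getVert (r - 1) := by
    refine (Walk.isInducedPath_getVert ?_).mono ?_
    · rw [Walk.drop_length, q.dist_getVert_end_of_length_eq_dist hq]
    · rw [Walk.drop_length, hq]
      omega
  have hcross' : ∀ i j, i ≤ r → j < r - 1 → (i < r ∨ 0 < j) →
      2 ≤ G.dist (p.getVert i) ((q.drop t).getVert j) := by
    intro i j hi hj hij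
    rw [Walk.drop_getVert]
    obtain h0 | hpos := Nat.eq_zero_or_pos (t + j)
    · rw [h0, q.getVert_zero]
      have := hpv i (by omega)
      omega
    obtain ⟨hne, hfar'⟩ := hpq i (t + j) hi hpos (by omega)
    by_cases h : i < r ∨ 2 ≤ t + j
    · exact hfar' h
    · obtain ⟨rfl, rfl, rfl⟩ : i = r ∧ t = 0 ∧ j = 1 := by omega
      refine hconn.one_lt_dist_of_ne_of_not_adj (fun heq => ?_) (hskip rfl)
      rw [zero_add, heq, dist_self] at hne
      omega
  have hglued := hpath.append hqpath (by simpa using hjoin) hcross'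
  rw [show r + 1 + (r - 1) = 2 * r by omega] at hglued
  exact hglued.nonempty_embedding

def pathGraphEmbeddingOfLE {m n : ℕ} (h : m ≤ n) : pathGraph m ↪g pathGraph n where
  toFun := Fin.castLE h
  inj' := Fin.castLE_injective h
  map_rel_iff' := by simp [pathGraph_adj]

theorem nonempty_pathGraph_embedding_of_forall_exists_lt_dist [Finite V] (hconn : G.Connected)
    (r : ℕ) (hfar : ∀ u, ∃ y, r < G.dist u y) :
    Nonempty (pathGraph (2 * r) ↪g G) := by
  induction hn : Nat.card V using Nat.strong_induction_on generalizing V with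
  | _ n ih =>
    obtain rfl | hr := Nat.eq_zero_or_pos r
    · exact ⟨⟨⟨fun i => i.elim0, fun i => i.elim0⟩, fun {i} => i.elim0⟩⟩
    have : Nontrivial V := by
      obtain ⟨u⟩ := hconn.nonempty
      obtain ⟨y, hy⟩ := hfar u
      exact nontrivial_of_ne u y (by rintro rfl; simp at hy)
    obtain ⟨v, hv⟩ := hconn.exists_connected_induce_compl_singleton_of_finite_nontrivial
    by_cases! hfar' : ∀ u, ∃ y, r < (G.induce {v}ᶜ).dist u y
    · have hcard : Nat.card ({v}ᶜ : Set V) < n := hn ▸ Finite.card_subtype_lt (x := v) (by simp)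
      obtain ⟨e⟩ := ih _ hcard hv hfar' rfl
      exact ⟨(Embedding.induce _).comp e⟩
    obtain ⟨c, hc⟩ := hfar'
    have hcG : ∀ x, x ≠ v → G.dist c x ≤ r := fun x hx =>
      ((hv.preconnected c ⟨x, hx⟩).dist_map_le (Embedding.induce _).toHom).trans (hc ⟨x, hx⟩)
    have hcv : r < G.dist c v := by
      obtain ⟨y, hy⟩ := hfar c
      by_cases hyv : y = v
      · exact hyv ▸ hy
      · have := hcG y hyv
        omega
    have hvc : G.dist v c = r + 1 := by
      obtain ⟨u, hvu⟩ := hconn.preconnected.exists_adj_of_nontrivial v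
      have htri := hconn.dist_triangle (u := c.1) (v := u) (w := v)
      have huv : G.dist u v = 1 := dist_eq_one_iff_adj.mpr hvu.symm
      have := hcG u hvu.ne.symm
      rw [dist_comm]
      omega
    exact nonempty_pathGraph_embedding_of_almost_center hconn hr hfar hvc hcG

theorem exists_forall_dist_le_of_isEmpty_pathGraph_embedding [Finite V] (hconn : G.Connected)
    {k r : ℕ} (hkr : k ≤ 2 * r) (hfree : IsEmpty (pathGraph k ↪g G)) :
    ∃ c, ∀ v, G.dist c v ≤ r := by
  by_contra! hfar
  obtain ⟨e⟩ := nonempty_pathGraph_embedding_of_forall_exists_lt_dist hconn r hfar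
  exact hfree.false (e.comp (pathGraphEmbeddingOfLE hkr))

end SimpleGraph

theorem burningNumber_le_of_forall_dist_le {V : Type*} {G : SimpleGraph V} (hconn : G.Connected)
    {c : V} {r : ℕ} (hc : ∀ v, G.dist c v ≤ r) : burningNumber G ≤ r + 1 := by
  refine Nat.sInf_le ⟨fun _ => c, fun v => ⟨0, ?_⟩⟩
  obtain ⟨w, hw⟩ := hconn.exists_walk_length_eq_dist v c
  exact ⟨w, by simpa [hw, dist_comm] using hc v⟩

theorem burningNumber_conjecture_of_pathFree_general {V : Type*} [Fintype V] (k : ℕ)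
    (G : SimpleGraph V) (hconn : G.Connected)
    (hfree : IsEmpty (pathGraph k ↪g G))
    (hklt : k < 2 * ⌈Real.sqrt (Fintype.card V)⌉₊ - 1) :
    burningNumber G ≤ ⌈Real.sqrt (Fintype.card V)⌉₊ := by
  set s := ⌈Real.sqrt (Fintype.card V)⌉₊
  obtain ⟨c, hc⟩ :=
    exists_forall_dist_le_of_isEmpty_pathGraph_embedding hconn (r := s - 1) (by omega) hfree
  calc burningNumber G ≤ s - 1 + 1 := burningNumber_le_of_forall_dist_le hconn hc
    _ = s := by omega

/-- The burning number conjecture holds for connected `P_k`-free graphs on `n` vertices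
whenever `k < 2⌈√n⌉ - 1`. -/
theorem burningNumber_conjecture_of_pathFree {V : Type*} [Fintype V] (k : ℕ) (hk : 2 ≤ k)
    (G : SimpleGraph V) (hconn : G.Connected)
    (hfree : IsEmpty (pathGraph k ↪g G))
    (hklt : k < 2 * ⌈Real.sqrt (Fintype.card V)⌉₊ - 1) :
    burningNumber G ≤ ⌈Real.sqrt (Fintype.card V)⌉₊ :=
  burningNumber_conjecture_of_pathFree_general k G hconn hfree hklt
end

section
/- Let G be a finite simple graph and let D be a nonempty dominating set of G. Then b(G) ≤ b(G[D]) + 1, where G[D] is the subgraph of G induced by D and distances for burning G[D] are taken within G[D]. -/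
open SimpleGraph

section

variable {V W : Type*} {G : SimpleGraph V} {H : SimpleGraph W}

/-- Burning every vertex, one at a time, is a burning sequence. -/
theorem exists_isBurningSeq [Finite V] (G : SimpleGraph V) :
    ∃ k, ∃ b : Fin k → V, IsBurningSeq G b := by
  obtain ⟨n, ⟨e⟩⟩ := Finite.exists_equiv_fin V
  refine ⟨n, e.symm, fun v => ⟨e v, Walk.nil.copy rfl (e.symm_apply_apply v).symm, ?_⟩⟩
  simp

theorem exists_isBurningSeq_burningNumber [Finite V] (G : SimpleGraph V) :
    ∃ b : Fin (burningNumber G) → V, IsBurningSeq G b :=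
  Nat.sInf_mem (exists_isBurningSeq G)

theorem IsBurningSeq.burningNumber_le {k : ℕ} {b : Fin k → V} (hb : IsBurningSeq G b) :
    burningNumber G ≤ k :=
  Nat.sInf_le ⟨b, hb⟩

theorem burningNumber_eq_zero_of_isEmpty [IsEmpty V] (G : SimpleGraph V) :
    burningNumber G = 0 :=
  Nat.le_zero.mp (IsBurningSeq.burningNumber_le (G := G) (b := Fin.elim0) isEmptyElim)

/-- Appending one more source delays every earlier fire by one round, which is exactly the
slack needed to reach the vertices at distance one from the image of `f`. -/
theorem IsBurningSeq.snoc_map {k : ℕ} {b : Fin k → W} (hb : IsBurningSeq H b) (f : H →g G)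
    (hf : ∀ v, ∃ u, ∃ w : G.Walk v (f u), w.length ≤ 1) (x : V) :
    IsBurningSeq G (Fin.snoc (f ∘ b) x : Fin (k + 1) → V) := by
  intro v
  obtain ⟨u, w₁, hw₁⟩ := hf v
  obtain ⟨i, w₂, hw₂⟩ := hb u
  refine ⟨i.castSucc, (w₁.append (w₂.map f)).copy rfl (by simp), ?_⟩
  simp only [Walk.length_copy, Walk.length_append, Walk.length_map, Fin.val_castSucc]
  omega

end

theorem burningNumber_le_burningNumber_induce_dominating_general {V : Type*} [Fintype V]
    (G : SimpleGraph V) (D : Set V)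
    (hdom : ∀ v : V, v ∉ D → ∃ u ∈ D, G.Adj v u) :
    burningNumber G ≤ burningNumber (G.induce D) + 1 := by
  rcases isEmpty_or_nonempty V with _ | ⟨⟨x⟩⟩
  · simp [burningNumber_eq_zero_of_isEmpty]
  obtain ⟨b, hb⟩ := exists_isBurningSeq_burningNumber (G.induce D)
  refine (hb.snoc_map (Embedding.induce D).toHom (fun v => ?_) x).burningNumber_le
  by_cases hv : v ∈ D
  · exact ⟨⟨v, hv⟩, .nil, zero_le_one⟩
  · obtain ⟨u, hu, hadj⟩ := hdom v hv
    exact ⟨⟨u, hu⟩, hadj.toWalk, le_rfl⟩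

/-- If `D` is a nonempty dominating set of `G`, then `b(G) ≤ b(G[D]) + 1`. -/
theorem burningNumber_le_burningNumber_induce_dominating {V : Type*} [Fintype V]
    (G : SimpleGraph V) (D : Set V) (hne : D.Nonempty)
    (hdom : ∀ v : V, v ∉ D → ∃ u ∈ D, G.Adj v u) :
    burningNumber G ≤ burningNumber (G.induce D) + 1 :=
  burningNumber_le_burningNumber_induce_dominating_general G D hdom
end

section
/- Let G be a finite connected simple graph with at least one edge. Then b(L(G)) ≤ b(G) + 1, where L(G) is the line graph of G. -/
open SimpleGraph

/-!
Burn the edges of `G` from edges through the sources of an optimal burning sequence of `G`,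
in the same order. An edge `e` has an endpoint `u` reached from some source `b i` within the
allotted time, and a walk of length `n` from `u` to `b i` in `G` lifts to a walk of length at
most `n + 1` in `L(G)` from `e` to any edge through `b i`. One extra round absorbs that `+ 1`.
-/

namespace SimpleGraph

variable {V W : Type*} {G : SimpleGraph V} {H : SimpleGraph W}

theorem burningNumber_le_of_isBurningSeq {k : ℕ} {b : Fin k → V} (hb : IsBurningSeq G b) :
    burningNumber G ≤ k :=
  Nat.sInf_le ⟨b, hb⟩

theorem exists_isBurningSeq_burningNumber [Finite V] (G : SimpleGraph V) :
    ∃ b : Fin (burningNumber G) → V, IsBurningSeq G b := by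
  refine Nat.sInf_mem (s := {k | ∃ b : Fin k → V, IsBurningSeq G b}) ?_
  obtain ⟨n, ⟨e⟩⟩ := Finite.exists_equiv_fin V
  refine ⟨n, e.symm, fun v => ⟨e v, Walk.nil.copy rfl (e.symm_apply_apply v).symm, ?_⟩⟩
  simp

/-- A burning sequence `b` of `G` gives the burning sequence `ψ ∘ b` of `H`, padded with `d`
arbitrary sources. -/
theorem burningNumber_le_add_of_exists_walk [Finite V] {d : ℕ} (ψ : V → W)
    (hψ : ∀ w : W, ∃ u : V, ∀ x (p : G.Walk u x), ∃ q : H.Walk w (ψ x), q.length ≤ p.length + d) :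
    burningNumber H ≤ burningNumber G + d := by
  rcases isEmpty_or_nonempty W with _ | ⟨⟨w₀⟩⟩
  · exact (burningNumber_le_of_isBurningSeq (b := Fin.elim0) isEmptyElim).trans (Nat.zero_le _)
  obtain ⟨b, hb⟩ := exists_isBurningSeq_burningNumber G
  refine burningNumber_le_of_isBurningSeq (b := Fin.append (ψ ∘ b) fun _ : Fin d => w₀) fun w => ?_
  obtain ⟨u, hu⟩ := hψ w
  obtain ⟨i, p, hp⟩ := hb u
  obtain ⟨q, hq⟩ := hu _ p
  refine ⟨Fin.castAdd d i, q.copy rfl (Fin.append_left (ψ ∘ b) _ i).symm, ?_⟩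
  simp only [Walk.length_copy, Fin.val_castAdd]
  omega

theorem exists_lineGraph_walk_length_le_one {e f : G.edgeSet} {v : V} (he : v ∈ (e : Sym2 V))
    (hf : v ∈ (f : Sym2 V)) : ∃ q : G.lineGraph.Walk e f, q.length ≤ 1 := by
  by_cases hef : e = f
  · subst hef
    exact ⟨Walk.nil, zero_le_one⟩
  · exact ⟨Walk.cons (lineGraph_adj_iff_exists.mpr ⟨hef, v, he, hf⟩) Walk.nil, le_rfl⟩

theorem Walk.exists_lineGraph_walk_length_le {u x : V} (p : G.Walk u x) {e f : G.edgeSet}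
    (hu : u ∈ (e : Sym2 V)) (hx : x ∈ (f : Sym2 V)) :
    ∃ q : G.lineGraph.Walk e f, q.length ≤ p.length + 1 := by
  induction p generalizing e with
  | nil => simpa using exists_lineGraph_walk_length_le_one hu hx
  | @cons a b _ hab p ih =>
    obtain ⟨q₁, hq₁⟩ := exists_lineGraph_walk_length_le_one (f := ⟨s(a, b), hab⟩) hu
      (Sym2.mem_mk_left a b)
    obtain ⟨q₂, hq₂⟩ := ih (e := ⟨s(a, b), hab⟩) (Sym2.mem_mk_right a b) hx
    refine ⟨q₁.append q₂, ?_⟩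
    rw [Walk.length_append, Walk.length_cons]
    omega

theorem burningNumber_lineGraph_le_add_one_of_forall_exists_adj [Finite V]
    (h : ∀ v, ∃ u, G.Adj v u) : burningNumber G.lineGraph ≤ burningNumber G + 1 := by
  choose nbr hnbr using h
  refine burningNumber_le_add_of_exists_walk (fun v => ⟨s(v, nbr v), hnbr v⟩) fun e => ?_
  exact ⟨_, fun _ p => p.exists_lineGraph_walk_length_le (Sym2.out_fst_mem (e : Sym2 V)) (Sym2.mem_mk_left _ _)⟩

end SimpleGraph

/-- For a connected graph `G` with at least one edge, `b(L(G)) ≤ b(G) + 1`. -/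
theorem burningNumber_lineGraph_le_burningNumber_add_one {V : Type*} [Fintype V]
    (G : SimpleGraph V) (hconn : G.Connected) (hedge : G.edgeSet.Nonempty) :
    burningNumber G.lineGraph ≤ burningNumber G + 1 := by
  obtain ⟨a, b, hab⟩ := ne_bot_iff_exists_adj.mp (edgeSet_nonempty.mp hedge)
  have := hab.nontrivial
  exact burningNumber_lineGraph_le_add_one_of_forall_exists_adj
    hconn.preconnected.exists_adj_of_nontrivial
end

section
/- Let G be a finite connected simple graph with at least one edge. Then b(G) − 1 ≤ b(L(G)) ≤ b(G) + 1, where L(G) is the line graph of G. -/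
/-!
A walk of length `n` in `G` from an endpoint of an edge `e` to an endpoint of an edge `f` gives
a walk of length at most `n + 1` from `e` to `f` in `L(G)`, and conversely, since consecutive
edges of a walk in `L(G)` share a vertex. So replacing every source of a burning sequence by an
incident edge (resp. an endpoint) burns everything one round late, which an extra last source
pays for. Incident edges exist because a connected graph with an edge has no isolated vertex.
-/

open SimpleGraph

namespace SimpleGraph

variable {V : Type*} {G : SimpleGraph V}

lemma exists_walk_length_le_one_of_mem_edgeSet {e : Sym2 V} (he : e ∈ G.edgeSet) {u v : V}
    (hu : u ∈ e) (hv : v ∈ e) : ∃ p : G.Walk u v, p.length ≤ 1 := by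
  by_cases huv : u = v
  · subst huv
    exact ⟨.nil, by simp⟩
  · rw [(Sym2.mem_and_mem_iff huv).mp ⟨hu, hv⟩, mem_edgeSet] at he
    exact ⟨he.toWalk, by simp⟩

lemma exists_lineGraph_walk_length_le_one_of_mem {e f : G.edgeSet} {v : V}
    (he : v ∈ (e : Sym2 V)) (hf : v ∈ (f : Sym2 V)) :
    ∃ w : G.lineGraph.Walk e f, w.length ≤ 1 := by
  by_cases hef : e = f
  · subst hef
    exact ⟨.nil, by simp⟩
  · exact ⟨(lineGraph_adj_iff_exists.mpr ⟨hef, v, he, hf⟩).toWalk, by simp⟩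

lemma Walk.exists_walk_of_lineGraph {e f : G.edgeSet} (w : G.lineGraph.Walk e f) {u v : V}
    (hu : u ∈ (e : Sym2 V)) (hv : v ∈ (f : Sym2 V)) :
    ∃ p : G.Walk u v, p.length ≤ w.length + 1 := by
  induction w generalizing u with
  | nil => exact exists_walk_length_le_one_of_mem_edgeSet (Subtype.coe_prop _) hu hv
  | cons hadj w ih =>
    obtain ⟨-, x, hx, hx'⟩ := lineGraph_adj_iff_exists.mp hadj
    obtain ⟨p, hp⟩ := exists_walk_length_le_one_of_mem_edgeSet (Subtype.coe_prop _) hu hx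
    obtain ⟨q, hq⟩ := ih hx' hv
    exact ⟨p.append q, by rw [Walk.length_append, Walk.length_cons]; omega⟩

lemma Walk.exists_lineGraph_walk {u v : V} (p : G.Walk u v) {e f : G.edgeSet}
    (he : u ∈ (e : Sym2 V)) (hf : v ∈ (f : Sym2 V)) :
    ∃ w : G.lineGraph.Walk e f, w.length ≤ p.length + 1 := by
  induction p generalizing e with
  | nil => exact exists_lineGraph_walk_length_le_one_of_mem he hf
  | @cons u x v hadj p ih =>
    let e' : G.edgeSet := ⟨s(u, x), hadj⟩
    obtain ⟨w, hw⟩ := exists_lineGraph_walk_length_le_one_of_mem (f := e') he (by simp [e'])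
    obtain ⟨w', hw'⟩ := ih (e := e') (by simp [e']) hf
    exact ⟨w.append w', by rw [Walk.length_append, Walk.length_cons]; omega⟩

end SimpleGraph

section Burning

variable {V W : Type*} {G : SimpleGraph V} {H : SimpleGraph W}

lemma isBurningSeq_snoc {k : ℕ} {b : Fin k → V}
    (hb : ∀ v, ∃ i : Fin k, ∃ p : G.Walk v (b i), p.length + i ≤ k) (x : V) :
    IsBurningSeq G (Fin.snoc b x : Fin (k + 1) → V) := by
  intro v
  obtain ⟨i, p, hp⟩ := hb v
  refine ⟨i.castSucc, ?_⟩
  rw [Fin.snoc_castSucc]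
  exact ⟨p, by simpa using hp⟩

lemma IsBurningSeq.exists_of_walk_transfer [Nonempty W] (φ : V → W) (ψ : W → V)
    (hφψ : ∀ w v (p : G.Walk (ψ w) v), ∃ q : H.Walk w (φ v), q.length ≤ p.length + 1)
    {k : ℕ} {b : Fin k → V} (hb : IsBurningSeq G b) :
    ∃ c : Fin (k + 1) → W, IsBurningSeq H c := by
  refine ⟨_, isBurningSeq_snoc (b := φ ∘ b) (fun w ↦ ?_) (Classical.arbitrary W)⟩
  obtain ⟨i, p, hp⟩ := hb (ψ w)
  obtain ⟨q, hq⟩ := hφψ w (b i) p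
  exact ⟨i, q, by omega⟩

/-- If no burning sequence exists, `sInf ∅ = 0` makes both burning numbers vanish. -/
lemma burningNumber_le_burningNumber_add_one
    (hGH : ∀ k (b : Fin k → V), IsBurningSeq G b → ∃ c : Fin (k + 1) → W, IsBurningSeq H c)
    (hHG : ∀ k (c : Fin k → W), IsBurningSeq H c → ∃ b : Fin (k + 1) → V, IsBurningSeq G b) :
    burningNumber H ≤ burningNumber G + 1 := by
  by_cases hG : {k : ℕ | ∃ b : Fin k → V, IsBurningSeq G b}.Nonempty
  · obtain ⟨b, hb⟩ := Nat.sInf_mem hG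
    exact Nat.sInf_le (hGH _ b hb)
  · have hH : {k : ℕ | ∃ c : Fin k → W, IsBurningSeq H c} = ∅ := by
      refine Set.eq_empty_of_forall_notMem fun k ⟨c, hc⟩ ↦ hG ?_
      exact ⟨k + 1, hHG k c hc⟩
    simp [burningNumber, hH]

end Burning

theorem burningNumber_lineGraph_bounds_general {V : Type*}
    (G : SimpleGraph V) (hconn : G.Connected) (hedge : G.edgeSet.Nonempty) :
    burningNumber G - 1 ≤ burningNumber G.lineGraph ∧
      burningNumber G.lineGraph ≤ burningNumber G + 1 := by
  obtain ⟨u, w, huw⟩ := G.ne_bot_iff_exists_adj.mp (G.edgeSet_nonempty.mp hedge)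
  have : Nontrivial V := huw.nontrivial
  have : Nonempty G.edgeSet := ⟨⟨s(u, w), huw⟩⟩
  choose nbr hnbr using hconn.preconnected.exists_adj_of_nontrivial
  let inc : V → G.edgeSet := fun v ↦ ⟨s(v, nbr v), hnbr v⟩
  let endpt : G.edgeSet → V := fun e ↦ (e : Sym2 V).out.1
  have toLine : ∀ k (b : Fin k → V), IsBurningSeq G b →
      ∃ c : Fin (k + 1) → G.edgeSet, IsBurningSeq G.lineGraph c := fun _ _ hb ↦
    hb.exists_of_walk_transfer inc endpt fun _ _ p ↦
      p.exists_lineGraph_walk (Sym2.out_fst_mem _) (by simp [inc])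
  have ofLine : ∀ k (c : Fin k → G.edgeSet), IsBurningSeq G.lineGraph c →
      ∃ b : Fin (k + 1) → V, IsBurningSeq G b := fun _ _ hc ↦
    hc.exists_of_walk_transfer endpt inc fun _ _ w ↦
      w.exists_walk_of_lineGraph (by simp [inc]) (Sym2.out_fst_mem _)
  have lower := burningNumber_le_burningNumber_add_one ofLine toLine
  exact ⟨by omega, burningNumber_le_burningNumber_add_one toLine ofLine⟩

/-- For a connected graph `G` with at least one edge,
`b(G) - 1 ≤ b(L(G)) ≤ b(G) + 1`. -/
theorem burningNumber_lineGraph_bounds {V : Type*} [Fintype V]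
    (G : SimpleGraph V) (hconn : G.Connected) (hedge : G.edgeSet.Nonempty) :
    burningNumber G - 1 ≤ burningNumber G.lineGraph ∧
      burningNumber G.lineGraph ≤ burningNumber G + 1 :=
  burningNumber_lineGraph_bounds_general G hconn hedge
end

section
/- Let T be a finite tree (a connected acyclic simple graph) with at least one edge. Then b(L(T)) ≤ b(T), where L(T) is the line graph of T. -/
open SimpleGraph

/-!
Root `T` at an endpoint `r` of an edge `rc` and send every vertex `v ≠ r` to the edge joining it
to its parent, and `r` to `rc`. Every edge is the image of its endpoint farther from `r`, and
adjacent vertices go to equal or adjacent edges, so walks in `T` project to walks in `L(T)` that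
are no longer. Hence the image of a burning sequence of `T` is a burning sequence of `L(T)`.
-/

namespace SimpleGraph

section Burning

variable {V W : Type*} {G : SimpleGraph V} {H : SimpleGraph W}

theorem Walk.exists_length_le_of_eq_or_adj (f : V → W)
    (hf : ∀ ⦃u v⦄, G.Adj u v → f u = f v ∨ H.Adj (f u) (f v)) {u v : V} (p : G.Walk u v) :
    ∃ q : H.Walk (f u) (f v), q.length ≤ p.length := by
  induction p with
  | nil => exact ⟨Walk.nil, le_rfl⟩
  | cons hadj _ ih =>
    obtain ⟨q, hq⟩ := ih
    rcases hf hadj with heq | hadj'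
    · exact ⟨q.copy heq.symm rfl, by simpa using hq.trans (Nat.le_succ _)⟩
    · exact ⟨Walk.cons hadj' q, by simpa using hq⟩

theorem IsBurningSeq.comp_of_eq_or_adj {k : ℕ} {b : Fin k → V} (hb : IsBurningSeq G b)
    {f : V → W} (hsurj : Function.Surjective f)
    (hf : ∀ ⦃u v⦄, G.Adj u v → f u = f v ∨ H.Adj (f u) (f v)) :
    IsBurningSeq H (f ∘ b) := by
  intro w
  obtain ⟨v, rfl⟩ := hsurj w
  obtain ⟨i, p, hp⟩ := hb v
  obtain ⟨q, hq⟩ := p.exists_length_le_of_eq_or_adj f hf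
  exact ⟨i, q, by omega⟩

theorem burningNumber_le_of_surjective_of_eq_or_adj [Finite V] {f : V → W}
    (hsurj : Function.Surjective f)
    (hf : ∀ ⦃u v⦄, G.Adj u v → f u = f v ∨ H.Adj (f u) (f v)) :
    burningNumber H ≤ burningNumber G := by
  obtain ⟨b, hb⟩ := exists_isBurningSeq_burningNumber G
  exact burningNumber_le_of_isBurningSeq (hb.comp_of_eq_or_adj hsurj hf)

end Burning

theorem eq_or_lineGraph_adj_of_mem {V : Type*} {G : SimpleGraph V} {e₁ e₂ : G.edgeSet} {v : V}
    (h₁ : v ∈ (e₁ : Sym2 V)) (h₂ : v ∈ (e₂ : Sym2 V)) : e₁ = e₂ ∨ G.lineGraph.Adj e₁ e₂ :=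
  or_iff_not_imp_left.2 fun hne => lineGraph_adj_iff_exists.2 ⟨hne, v, h₁, h₂⟩

namespace IsTree

variable {V : Type*} {T : SimpleGraph V} (hT : T.IsTree)

noncomputable def pathTo (v r : V) : T.Walk v r :=
  (hT.existsUnique_path v r).exists.choose

theorem isPath_pathTo (v r : V) : (hT.pathTo v r).IsPath :=
  (hT.existsUnique_path v r).exists.choose_spec

theorem eq_pathTo {v r : V} {p : T.Walk v r} (hp : p.IsPath) : p = hT.pathTo v r :=
  (hT.existsUnique_path v r).unique hp (hT.isPath_pathTo v r)

noncomputable def parent (r v : V) : V :=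
  (hT.pathTo v r).snd

theorem parent_self (r : V) : hT.parent r r = r := by
  rw [parent, ← hT.eq_pathTo Walk.IsPath.nil]
  rfl

theorem adj_parent {r v : V} (hv : v ≠ r) : T.Adj v (hT.parent r v) :=
  Walk.adj_snd (Walk.not_nil_of_ne hv)

theorem parent_eq_or_parent_eq_of_adj (r : V) {u v : V} (h : T.Adj u v) :
    hT.parent r u = v ∨ hT.parent r v = u := by
  by_cases hv : v ∈ (hT.pathTo u r).support
  · exact Or.inl (hT.isAcyclic.eq_snd_of_adj_start (hT.isPath_pathTo u r) h hv).symm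
  · right
    rw [parent, ← hT.eq_pathTo ((hT.isPath_pathTo u r).cons (h := h.symm) hv), Walk.snd_cons]

variable [DecidableEq V] {r c : V} (hrc : T.Adj r c)

noncomputable def parentEdge (v : V) : T.edgeSet :=
  if hv : v = r then ⟨s(r, c), hrc⟩ else ⟨s(v, hT.parent r v), hT.adj_parent hv⟩

theorem mem_parentEdge_self (v : V) : v ∈ (hT.parentEdge hrc v : Sym2 V) := by
  unfold parentEdge
  split_ifs with hv
  · exact hv ▸ Sym2.mem_mk_left _ _
  · exact Sym2.mem_mk_left _ _

theorem parentEdge_of_parent_eq {u v : V} (huv : T.Adj u v) (hp : hT.parent r u = v) :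
    (hT.parentEdge hrc u : Sym2 V) = s(u, v) := by
  have hu : u ≠ r := fun hu => huv.ne (by rw [← hp, hu, hT.parent_self])
  simp [parentEdge, hu, hp]

theorem parentEdge_surjective : Function.Surjective (hT.parentEdge hrc) := by
  rintro ⟨⟨x, y⟩, he⟩
  rcases hT.parent_eq_or_parent_eq_of_adj r he with hp | hp
  · exact ⟨x, Subtype.ext (hT.parentEdge_of_parent_eq hrc he hp)⟩
  · exact ⟨y, Subtype.ext ((hT.parentEdge_of_parent_eq hrc he.symm hp).trans Sym2.eq_swap)⟩

theorem parentEdge_eq_or_adj {u v : V} (h : T.Adj u v) :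
    hT.parentEdge hrc u = hT.parentEdge hrc v ∨
      T.lineGraph.Adj (hT.parentEdge hrc u) (hT.parentEdge hrc v) := by
  rcases hT.parent_eq_or_parent_eq_of_adj r h with hp | hp
  · refine eq_or_lineGraph_adj_of_mem (v := v) ?_ (hT.mem_parentEdge_self hrc v)
    rw [hT.parentEdge_of_parent_eq hrc h hp]
    exact Sym2.mem_mk_right _ _
  · refine eq_or_lineGraph_adj_of_mem (v := u) (hT.mem_parentEdge_self hrc u) ?_
    rw [hT.parentEdge_of_parent_eq hrc h.symm hp]
    exact Sym2.mem_mk_right _ _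

end IsTree

end SimpleGraph

/-- For a tree `T` with at least one edge, `b(L(T)) ≤ b(T)`. -/
theorem burningNumber_lineGraph_le_burningNumber_of_isTree {V : Type*} [Fintype V]
    (T : SimpleGraph V) (htree : T.IsTree) (hedge : T.edgeSet.Nonempty) :
    burningNumber T.lineGraph ≤ burningNumber T := by
  classical
  obtain ⟨⟨r, c⟩, hrc⟩ := hedge
  exact burningNumber_le_of_surjective_of_eq_or_adj (htree.parentEdge_surjective hrc)
    fun _ _ h => htree.parentEdge_eq_or_adj hrc h
end

section
/- For every integer n ≥ 1, the path P on n² + 1 vertices satisfies b(P) = n + 1 and b(L(P)) = n, where L(P) is the line graph of P. In particular, the lower bound b(G) − 1 ≤ b(L(G)) is attained with equality for these paths. -/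
/-!
In a path, a ball of radius `r` has at most `2r + 1` vertices, so a burning sequence of length `k`
burns at most `∑_{r < k} (2r + 1) = k²` vertices of `P_m`; conversely, blocks of sizes
`2k - 1, 2k - 3, …, 1` tile a path on `k²` vertices, each around a source of matching radius.
Hence `b(P_m) ≤ k ↔ m ≤ k²`, i.e. `b(P_m) = ⌈√m⌉`. Since `L(P_{m+1}) ≅ P_m`, this gives
`b(P_{n²+1}) = n + 1` and `b(L(P_{n²+1})) = b(P_{n²}) = n`.
-/

open SimpleGraph

open Finset

section Burning

variable {V W : Type*} {G : SimpleGraph V} {H : SimpleGraph W} {k : ℕ}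

theorem IsBurningSeq.map (φ : G ≃g H) {b : Fin k → V} (hb : IsBurningSeq G b) :
    IsBurningSeq H (φ ∘ b) := by
  intro v
  obtain ⟨i, w, hw⟩ := hb (φ.symm v)
  refine ⟨i, (w.map φ.toHom).copy (φ.apply_symm_apply v) rfl, ?_⟩
  rwa [Walk.length_copy, Walk.length_map]

theorem SimpleGraph.Iso.burningNumber_eq (φ : G ≃g H) : burningNumber G = burningNumber H := by
  unfold burningNumber
  congr 1
  ext k
  exact ⟨fun ⟨b, hb⟩ ↦ ⟨φ ∘ b, hb.map φ⟩, fun ⟨b, hb⟩ ↦ ⟨φ.symm ∘ b, hb.map φ.symm⟩⟩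

theorem isBurningSeq_iff_dist (hG : G.Preconnected) (b : Fin k → V) :
    IsBurningSeq G b ↔ ∀ v, ∃ i : Fin k, G.dist v (b i) + i + 1 ≤ k := by
  refine forall_congr' fun v ↦ exists_congr fun i ↦ ⟨?_, fun h ↦ ?_⟩
  · rintro ⟨w, hw⟩
    have := dist_le w
    omega
  · obtain ⟨w, hw⟩ := (hG v (b i)).exists_walk_length_eq_dist
    exact ⟨w, hw ▸ h⟩

end Burning

section PathGraph

variable {m k : ℕ}

theorem pathGraph_exists_walk_length_eq_of_le {u v : Fin m} (huv : u ≤ v) :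
    ∃ w : (pathGraph m).Walk u v, w.length = v - u := by
  obtain ⟨d, hd⟩ : ∃ d, (v : ℕ) = u + d := ⟨v - u, by omega⟩
  induction d generalizing u with
  | zero =>
    obtain rfl : u = v := Fin.ext hd.symm
    exact ⟨.nil, by simp⟩
  | succ d ih =>
    have hu : (u : ℕ) + 1 < m := by omega
    obtain ⟨w, hw⟩ := ih (u := ⟨u + 1, hu⟩) (Fin.mk_le_of_le_val (by omega)) (by simp; omega)
    exact ⟨.cons (pathGraph_adj.2 (Or.inl rfl)) w, by simp [hw]; omega⟩

theorem pathGraph_natDist_le_length {u v : Fin m} (w : (pathGraph m).Walk u v) :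
    Nat.dist u v ≤ w.length := by
  induction w with
  | nil => simp
  | cons h w ih =>
    rw [pathGraph_adj] at h
    simp only [Walk.length_cons, Nat.dist] at ih ⊢
    omega

theorem pathGraph_dist (u v : Fin m) : (pathGraph m).dist u v = Nat.dist u v := by
  refine le_antisymm ?_ ?_
  · wlog huv : u ≤ v generalizing u v
    · rw [dist_comm, Nat.dist_comm]
      exact this v u (le_of_not_ge huv)
    obtain ⟨w, hw⟩ := pathGraph_exists_walk_length_eq_of_le huv
    exact (dist_le w).trans (by simp only [hw, Nat.dist]; omega)
  · obtain ⟨w, hw⟩ := (pathGraph_preconnected m u v).exists_walk_length_eq_dist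
    exact hw ▸ pathGraph_natDist_le_length w

theorem isBurningSeq_pathGraph_iff (b : Fin k → Fin m) :
    IsBurningSeq (pathGraph m) b ↔ ∀ v : Fin m, ∃ i : Fin k, Nat.dist v (b i) + i + 1 ≤ k := by
  simp only [isBurningSeq_iff_dist (pathGraph_preconnected m), pathGraph_dist]

theorem Finset.sum_range_two_mul_add_one (k : ℕ) : ∑ i ∈ range k, (2 * i + 1) = k ^ 2 := by
  induction k with
  | zero => rfl
  | succ k ih => rw [sum_range_succ, ih]; ring

theorem IsBurningSeq.le_sq_of_pathGraph {b : Fin k → Fin m}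
    (hb : IsBurningSeq (pathGraph m) b) : m ≤ k ^ 2 := by
  rw [isBurningSeq_pathGraph_iff] at hb
  calc m = #(range m) := (card_range m).symm
    _ ≤ #(univ.biUnion fun i : Fin k ↦ Icc (b i - (k - 1 - i)) (b i + (k - 1 - i))) := by
        refine card_le_card fun v hv ↦ ?_
        obtain ⟨i, hi⟩ := hb ⟨v, mem_range.1 hv⟩
        simp only [mem_biUnion, mem_univ, mem_Icc, true_and, Nat.dist] at hi ⊢
        exact ⟨i, by omega⟩
    _ ≤ ∑ i : Fin k, #(Icc (b i - (k - 1 - i)) (b i + (k - 1 - i))) := card_biUnion_le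
    _ ≤ ∑ i : Fin k, (2 * (k - 1 - i) + 1) := sum_le_sum fun i _ ↦ by rw [Nat.card_Icc]; omega
    _ = k ^ 2 := by
        rw [Fin.sum_univ_eq_sum_range (fun i ↦ 2 * (k - 1 - i) + 1),
          sum_range_reflect (fun i ↦ 2 * i + 1), sum_range_two_mul_add_one]

-- The source lit at step `i` has radius `r = k - 1 - i` and sits at the centre of the block
-- `[k² - (r + 1)², k² - r²)`, these blocks partitioning `[0, k²)`; the centre is moved back to
-- the last vertex when it lies beyond it.
theorem exists_isBurningSeq_pathGraph (hm : 0 < m) (hmk : m ≤ k ^ 2) :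
    ∃ b : Fin k → Fin m, IsBurningSeq (pathGraph m) b := by
  refine ⟨fun i ↦ ⟨min (k ^ 2 - (k - i) ^ 2 + (k - 1 - i)) (m - 1), by omega⟩, ?_⟩
  rw [isBurningSeq_pathGraph_iff]
  intro v
  set r := Nat.sqrt (k ^ 2 - 1 - v)
  have hrk : r < k := Nat.sqrt_lt'.2 (by omega)
  have hr₁ : r ^ 2 ≤ k ^ 2 - 1 - v := Nat.sqrt_le' _
  have hr₂ : k ^ 2 - 1 - v < (r + 1) ^ 2 := Nat.lt_succ_sqrt' _
  have hr₃ : (r + 1) ^ 2 ≤ k ^ 2 := Nat.pow_le_pow_left hrk 2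
  have hsq : (r + 1) ^ 2 = r ^ 2 + 2 * r + 1 := by ring
  refine ⟨⟨k - 1 - r, by omega⟩, ?_⟩
  simp only [show k - (k - 1 - r) = r + 1 by omega, show k - 1 - (k - 1 - r) = r by omega,
    Nat.dist]
  omega

theorem burningNumber_pathGraph_le_iff : burningNumber (pathGraph m) ≤ k ↔ m ≤ k ^ 2 := by
  rcases Nat.eq_zero_or_pos m with rfl | hm
  · have : burningNumber (pathGraph 0) = 0 :=
      Nat.sInf_eq_zero.2 (.inl ⟨Fin.elim0, fun v ↦ v.elim0⟩)
    simp [this]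
  have hS : {k | ∃ b : Fin k → Fin m, IsBurningSeq (pathGraph m) b} = {k | m ≤ k ^ 2} :=
    Set.ext fun k ↦ ⟨fun ⟨_, hb⟩ ↦ hb.le_sq_of_pathGraph, exists_isBurningSeq_pathGraph hm⟩
  rw [burningNumber, hS]
  refine ⟨fun h ↦ ?_, fun h ↦ Nat.sInf_le h⟩
  have hmem : sInf {k | m ≤ k ^ 2} ∈ {k | m ≤ k ^ 2} :=
    Nat.sInf_mem ⟨m, Nat.le_self_pow two_ne_zero m⟩
  exact hmem.trans (Nat.pow_le_pow_left h 2)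

def pathGraphEdge (m : ℕ) (i : Fin m) : (pathGraph (m + 1)).edgeSet :=
  ⟨s(i.castSucc, i.succ), pathGraph_adj.2 (.inl rfl)⟩

theorem pathGraphEdge_bijective (m : ℕ) : Function.Bijective (pathGraphEdge m) := by
  refine ⟨fun i j h ↦ ?_, fun ⟨e, he⟩ ↦ ?_⟩
  · rcases Sym2.eq_iff.1 (Subtype.ext_iff.1 h) with ⟨h, -⟩ | ⟨h₁, h₂⟩
    · exact Fin.castSucc_injective m h
    · simp only [Fin.ext_iff, Fin.val_castSucc, Fin.val_succ] at h₁ h₂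
      omega
  · induction e using Sym2.inductionOn with
    | hf u v =>
      rcases pathGraph_adj.1 ((mem_edgeSet _).1 he) with h | h
      · exact ⟨⟨u, by omega⟩, Subtype.ext (Sym2.eq_iff.2 (.inl ⟨rfl, Fin.ext (by simp; omega)⟩))⟩
      · exact ⟨⟨v, by omega⟩, Subtype.ext (Sym2.eq_iff.2 (.inr ⟨rfl, Fin.ext (by simp; omega)⟩))⟩

theorem pathGraphEdge_adj_iff {m : ℕ} {i j : Fin m} :
    (pathGraph (m + 1)).lineGraph.Adj (pathGraphEdge m i) (pathGraphEdge m j) ↔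
      (pathGraph m).Adj i j := by
  rw [lineGraph_adj_iff_exists, pathGraph_adj, Ne, (pathGraphEdge_bijective m).1.eq_iff]
  simp only [pathGraphEdge, Sym2.mem_iff, or_and_right, exists_or, exists_eq_left]
  simp only [Fin.ext_iff, Fin.val_castSucc, Fin.val_succ]
  omega

noncomputable def pathGraphIsoLineGraph (m : ℕ) :
    pathGraph m ≃g (pathGraph (m + 1)).lineGraph where
  toEquiv := .ofBijective _ (pathGraphEdge_bijective m)
  map_rel_iff' := pathGraphEdge_adj_iff

theorem burningNumber_pathGraph_sq_add_one_general (n : ℕ) :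
    burningNumber (pathGraph (n ^ 2 + 1)) = n + 1 ∧
      burningNumber (pathGraph (n ^ 2 + 1)).lineGraph = n := by
  rw [← (pathGraphIsoLineGraph (n ^ 2)).burningNumber_eq]
  refine ⟨le_antisymm ?_ ?_, le_antisymm ?_ ?_⟩
  · exact burningNumber_pathGraph_le_iff.2 (by ring_nf; omega)
  · exact not_le.1 (mt burningNumber_pathGraph_le_iff.1 (by omega))
  · exact burningNumber_pathGraph_le_iff.2 le_rfl
  · exact (Nat.pow_le_pow_iff_left two_ne_zero).1 (burningNumber_pathGraph_le_iff.1 le_rfl)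

/-- For `n ≥ 1`, the path `P` on `n² + 1` vertices satisfies `b(P) = n + 1` and
`b(L(P)) = n`; in particular `b(P) - 1 = b(L(P))`, so the lower bound
`b(G) - 1 ≤ b(L(G))` is attained with equality. -/
theorem burningNumber_pathGraph_sq_add_one (n : ℕ) (hn : 1 ≤ n) :
    burningNumber (pathGraph (n ^ 2 + 1)) = n + 1 ∧
      burningNumber (pathGraph (n ^ 2 + 1)).lineGraph = n :=
  burningNumber_pathGraph_sq_add_one_general n
end PathGraph
end

section
/- For every integer n ≥ 5, the complete graph K_n satisfies b(K_n) = 2 and b(L(K_n)) = 3, where L(K_n) is the line graph of K_n. In particular, the upper bound b(L(G)) ≤ b(G) + 1 is attained with equality for these complete graphs. -/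
/-!
A constant sequence of length `k` at a vertex `c` burns every vertex within distance `k - 1`
of `c`. This gives `b(K_n) ≤ 2`, and `b(L(K_n)) ≤ 3` because two edges of `K_n` are equal,
adjacent, or both meet the edge joining an endpoint of one to an endpoint of the other.
Prepending a source lengthens a burning sequence, so for the lower bounds it suffices to exclude
length `b - 1`. A sequence of length 1 burns a single vertex. In a burning sequence `(e₀, e₁)`
of `L(K_n)` every edge other than `e₁` meets `e₀`; but three vertices `c, d, e` outside `e₀`,
which exist as `n ≥ 5`, give two edges `cd`, `ce` avoiding `e₀`.
-/

open SimpleGraph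

namespace SimpleGraph

variable {V : Type*} {G : SimpleGraph V}

theorem exists_walk_length_le_one_iff {u v : V} :
    (∃ w : G.Walk u v, w.length ≤ 1) ↔ u = v ∨ G.Adj u v := by
  constructor
  · rintro ⟨w, hw⟩
    rcases Nat.le_one_iff_eq_zero_or_eq_one.mp hw with h | h
    · exact .inl (Walk.eq_of_length_eq_zero h)
    · exact .inr (Walk.adj_of_length_eq_one h)
  · rintro (rfl | h)
    · exact ⟨.nil, by simp⟩
    · exact ⟨h.toWalk, by simp⟩

theorem lineGraph_eq_or_adj_iff {e f : G.edgeSet} :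
    e = f ∨ G.lineGraph.Adj e f ↔ ∃ v, v ∈ (e : Sym2 V) ∧ v ∈ (f : Sym2 V) := by
  rw [lineGraph_adj_iff_exists]
  constructor
  · rintro (rfl | ⟨-, h⟩)
    · exact ⟨_, Sym2.out_fst_mem _, Sym2.out_fst_mem _⟩
    · exact h
  · intro h
    by_cases hef : e = f
    · exact .inl hef
    · exact .inr ⟨hef, h⟩

theorem completeGraph_lineGraph_exists_walk_length_le_two (e f : (completeGraph V).edgeSet) :
    ∃ w : (completeGraph V).lineGraph.Walk e f, w.length ≤ 2 := by
  have walk_of_mem {e f : (completeGraph V).edgeSet} {v : V} (he : v ∈ (e : Sym2 V))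
      (hf : v ∈ (f : Sym2 V)) : ∃ w : (completeGraph V).lineGraph.Walk e f, w.length ≤ 1 :=
    exists_walk_length_le_one_iff.mpr (lineGraph_eq_or_adj_iff.mpr ⟨v, he, hf⟩)
  obtain ⟨a, ha⟩ : ∃ a, a ∈ (e : Sym2 V) := ⟨_, Sym2.out_fst_mem _⟩
  obtain ⟨b, hb⟩ : ∃ b, b ∈ (f : Sym2 V) := ⟨_, Sym2.out_fst_mem _⟩
  by_cases hab : a = b
  · subst hab
    obtain ⟨w, hw⟩ := walk_of_mem ha hb
    exact ⟨w, by omega⟩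
  · let g : (completeGraph V).edgeSet := ⟨s(a, b), hab⟩
    obtain ⟨w₁, hw₁⟩ := walk_of_mem (f := g) ha (Sym2.mem_mk_left a b)
    obtain ⟨w₂, hw₂⟩ := walk_of_mem (e := g) (Sym2.mem_mk_right a b) hb
    exact ⟨w₁.append w₂, by rw [Walk.length_append]; omega⟩

theorem completeGraph_exists_ne_edges_avoiding [Fintype V] (hV : 5 ≤ Fintype.card V)
    (e : Sym2 V) : ∃ f g : (completeGraph V).edgeSet, f ≠ g ∧
      (∀ v ∈ (f : Sym2 V), v ∉ e) ∧ ∀ v ∈ (g : Sym2 V), v ∉ e := by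
  classical
  refine Sym2.inductionOn e fun x y => ?_
  have hcard : 2 < (Finset.univ \ {x, y} : Finset V).card := by
    have := Finset.le_card_sdiff {x, y} (Finset.univ : Finset V)
    have := Finset.card_le_two (a := x) (b := y)
    rw [Finset.card_univ] at *
    omega
  obtain ⟨c, hc, d, hd, e, he, hcd, hce, hde⟩ := Finset.two_lt_card.mp hcard
  simp only [Finset.mem_sdiff, Finset.mem_univ, Finset.mem_insert, Finset.mem_singleton,
    true_and] at hc hd he
  refine ⟨⟨s(c, d), hcd⟩, ⟨s(c, e), hce⟩,
    fun h => hde (Sym2.congr_right.mp (congrArg Subtype.val h)), ?_, ?_⟩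
  all_goals grind

end SimpleGraph

section Burning

variable {V : Type*} {G : SimpleGraph V}

theorem IsBurningSeq.cons {k : ℕ} {b : Fin k → V} (hb : IsBurningSeq G b) (x : V) :
    IsBurningSeq G (Fin.cons x b : Fin (k + 1) → V) := by
  intro v
  obtain ⟨i, w, hw⟩ := hb v
  exact ⟨i.succ, w.copy rfl (by simp), by simp; omega⟩

theorem exists_isBurningSeq_of_le [Nonempty V] {j k : ℕ} (hjk : j ≤ k)
    (h : ∃ b : Fin j → V, IsBurningSeq G b) : ∃ b : Fin k → V, IsBurningSeq G b := by
  induction k, hjk using Nat.le_induction with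
  | base => exact h
  | succ k _ ih =>
    obtain ⟨b, hb⟩ := ih
    exact ⟨_, hb.cons (Classical.arbitrary V)⟩

theorem burningNumber_eq_succ [Nonempty V] {k : ℕ}
    (h : ∃ b : Fin (k + 1) → V, IsBurningSeq G b) (h' : ¬∃ b : Fin k → V, IsBurningSeq G b) :
    burningNumber G = k + 1 := by
  refine le_antisymm (Nat.sInf_le h) (le_csInf ⟨_, h⟩ fun j hj => ?_)
  by_contra! hjk
  exact h' (exists_isBurningSeq_of_le (Nat.le_of_lt_succ hjk) hj)

theorem isBurningSeq_const {k : ℕ} (c : V) (h : ∀ v, ∃ w : G.Walk v c, w.length < k) :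
    IsBurningSeq G (fun _ : Fin k => c) := by
  intro v
  obtain ⟨w, hw⟩ := h v
  have hk : 0 < k := by omega
  exact ⟨⟨0, hk⟩, w, show w.length + 0 + 1 ≤ k by omega⟩

theorem IsBurningSeq.subsingleton {b : Fin 1 → V} (hb : IsBurningSeq G b) : Subsingleton V := by
  have h (v : V) : v = b 0 := by
    obtain ⟨i, w, hw⟩ := hb v
    obtain rfl : i = 0 := Subsingleton.elim _ _
    have hw : w.length = 0 := by rw [Fin.val_zero] at hw; omega
    exact Walk.eq_of_length_eq_zero hw
  exact ⟨fun u v => (h u).trans (h v).symm⟩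

theorem IsBurningSeq.eq_or_adj_of_ne {b : Fin 2 → V} (hb : IsBurningSeq G b) {v : V}
    (hv : v ≠ b 1) : v = b 0 ∨ G.Adj v (b 0) := by
  obtain ⟨i, w, hw⟩ := hb v
  by_cases hi : i = 1
  · subst hi
    have hw : w.length = 0 := by rw [Fin.val_one] at hw; omega
    exact absurd (Walk.eq_of_length_eq_zero hw) hv
  · obtain rfl : i = 0 := by omega
    have hw : w.length ≤ 1 := by rw [Fin.val_zero] at hw; omega
    exact exists_walk_length_le_one_iff.mp ⟨w, hw⟩


theorem burningNumber_completeGraph_eq_two [Nontrivial V] :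
    burningNumber (completeGraph V) = 2 := by
  obtain ⟨c⟩ := (inferInstance : Nonempty V)
  refine burningNumber_eq_succ ⟨_, isBurningSeq_const c fun v => ?_⟩
    fun ⟨_, hb⟩ => not_subsingleton V hb.subsingleton
  obtain ⟨w, hw⟩ := (exists_walk_length_le_one_iff (G := completeGraph V)).mpr (eq_or_ne v c)
  exact ⟨w, by omega⟩

theorem burningNumber_lineGraph_completeGraph_eq_three [Fintype V] (hV : 5 ≤ Fintype.card V) :
    burningNumber (completeGraph V).lineGraph = 3 := by
  have : Nontrivial V := Fintype.one_lt_card_iff_nontrivial.mp (by omega)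
  obtain ⟨x, y, hxy⟩ := exists_pair_ne V
  let e₀ : (completeGraph V).edgeSet := ⟨s(x, y), hxy⟩
  have : Nonempty (completeGraph V).edgeSet := ⟨e₀⟩
  refine burningNumber_eq_succ ⟨_, isBurningSeq_const e₀ fun e => ?_⟩ fun ⟨b, hb⟩ => ?_
  · obtain ⟨w, hw⟩ := completeGraph_lineGraph_exists_walk_length_le_two e e₀
    exact ⟨w, by omega⟩
  have meets {e} (he : e ≠ b 1) : ∃ v, v ∈ (e : Sym2 V) ∧ v ∈ (b 0 : Sym2 V) :=
    lineGraph_eq_or_adj_iff.mp (hb.eq_or_adj_of_ne he)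
  obtain ⟨f, g, hfg, hf, hg⟩ := completeGraph_exists_ne_edges_avoiding hV (b 0)
  by_cases hf1 : f = b 1
  · obtain ⟨v, hvg, hv0⟩ := meets (hf1 ▸ hfg.symm)
    exact hg v hvg hv0
  · obtain ⟨v, hvf, hv0⟩ := meets hf1
    exact hf v hvf hv0

end Burning

/-- For `n ≥ 5`, the complete graph `K_n` satisfies `b(K_n) = 2` and `b(L(K_n)) = 3`;
in particular the upper bound `b(L(G)) ≤ b(G) + 1` is attained with equality. -/
theorem burningNumber_completeGraph (n : ℕ) (hn : 5 ≤ n) :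
    burningNumber (completeGraph (Fin n)) = 2 ∧
      burningNumber (completeGraph (Fin n)).lineGraph = 3 := by
  have : Nontrivial (Fin n) := Fin.nontrivial_iff_two_le.mpr (by omega)
  exact ⟨burningNumber_completeGraph_eq_two,
    burningNumber_lineGraph_completeGraph_eq_three (by simpa using hn)⟩
end

section
/- For every integer r ≥ 2, the spider 𝔓_r, consisting of one center vertex with r legs attached, where each leg is a path with r − 1 edges from the center to a leaf, is P_{2r}-free; consequently, for every integer k ≥ 4, taking r = ⌊k/2⌋ gives a P_k-free graph whose burning number equals ⌊k/2⌋. -/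
open SimpleGraph

/-- The spider `𝔓_r`: a center vertex (`none`) with `r` legs, each leg being a path with
`r - 1` edges from the center to a leaf; `some (i, j)` is the `(j + 1)`-st vertex along
leg `i`, counted from the center. -/
def spider (r : ℕ) : SimpleGraph (Option (Fin r × Fin (r - 1))) :=
  SimpleGraph.fromRel (fun x y =>
    match x, y with
    | none, some (_, j) => (j : ℕ) = 0
    | some (i, j), some (i', j') => i = i' ∧ (j' : ℕ) = (j : ℕ) + 1
    | _, _ => False)

/-!
A path in `𝔓_r` meets the center at most once, and each stretch of it avoiding the center is
confined to a single leg, which has `r - 1` vertices; so a path has at most `2r - 1` vertices.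

Burning from the center alone takes `r` rounds. Conversely, the depth along a fixed leg changes by
at most one per edge, so a source burning the leaf of that leg within fewer than `r - 1` steps
lies on the leg itself; fewer than `r` sources therefore cannot reach all `r` leaves.
-/

lemma pathGraph_isContained_pathGraph {m n : ℕ} (h : m ≤ n) : pathGraph m ⊑ pathGraph n :=
  ⟨⟨⟨Fin.castLE h, by simp [pathGraph_adj]⟩, Fin.castLE_injective h⟩⟩

section Spider

variable {r : ℕ}

@[simp]
lemma spider_adj_none_none : ¬(spider r).Adj none none := by
  simp [spider]

@[simp]
lemma spider_adj_none_some {m : Fin r} {j : Fin (r - 1)} :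
    (spider r).Adj none (some (m, j)) ↔ (j : ℕ) = 0 := by
  simp [spider]

@[simp]
lemma spider_adj_some_none {m : Fin r} {j : Fin (r - 1)} :
    (spider r).Adj (some (m, j)) none ↔ (j : ℕ) = 0 := by
  simp [spider]

@[simp]
lemma spider_adj_some_some {m m' : Fin r} {j j' : Fin (r - 1)} :
    (spider r).Adj (some (m, j)) (some (m', j')) ↔
      m = m' ∧ ((j' : ℕ) = j + 1 ∨ (j : ℕ) = j' + 1) := by
  simp only [spider, fromRel_adj]
  grind

lemma spider_chain_map_fst_eq {g : ℕ → Option (Fin r × Fin (r - 1))} {a b : ℕ}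
    (hadj : ∀ s, a ≤ s → s + 1 < b → (spider r).Adj (g s) (g (s + 1)))
    (hcenter : ∀ s ∈ Set.Ico a b, g s ≠ none) :
    ∀ s ∈ Set.Ico a b, (g s).map Prod.fst = (g a).map Prod.fst := by
  rintro s ⟨has, hsb⟩
  induction s, has using Nat.le_induction with
  | base => rfl
  | succ s has ih =>
    rw [← ih (by omega)]
    have hs := hadj s has hsb
    rcases hgs : g s with _ | ⟨m, j⟩
    · exact absurd hgs (hcenter s ⟨has, by omega⟩)
    rcases hgs' : g (s + 1) with _ | ⟨m', j'⟩
    · exact absurd hgs' (hcenter (s + 1) ⟨by omega, hsb⟩)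
    rw [hgs, hgs', spider_adj_some_some] at hs
    simp [hs.1]

lemma spider_chain_length_le {g : ℕ → Option (Fin r × Fin (r - 1))} {a b : ℕ}
    (hadj : ∀ s, a ≤ s → s + 1 < b → (spider r).Adj (g s) (g (s + 1)))
    (hinj : Set.InjOn g (Set.Ico a b)) (hcenter : ∀ s ∈ Set.Ico a b, g s ≠ none) :
    b - a ≤ r - 1 := by
  obtain hba | hab := le_or_gt b a
  · omega
  obtain ⟨m, j, hga⟩ : ∃ m j, g a = some (m, j) := by
    rcases hga : g a with _ | ⟨m, j⟩
    · exact absurd hga (hcenter a ⟨le_rfl, hab⟩)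
    · exact ⟨m, j, rfl⟩
  let leg := Finset.univ.image fun j : Fin (r - 1) ↦ some (m, j)
  have hleg : Set.MapsTo g (Finset.Ico a b) leg := by
    intro s hs
    rw [Finset.coe_Ico] at hs
    have := spider_chain_map_fst_eq hadj hcenter s hs
    rcases hgs : g s with _ | ⟨m', j'⟩
    · exact absurd hgs (hcenter s hs)
    · simp_all [leg]
  calc b - a = (Finset.Ico a b).card := (Nat.card_Ico a b).symm
    _ ≤ leg.card :=
      Finset.card_le_card_of_injOn g hleg (by rwa [Finset.coe_Ico])
    _ ≤ r - 1 := Finset.card_image_le.trans (by simp)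

theorem pathGraph_free_spider (hr : 0 < r) : (pathGraph (2 * r)).Free (spider r) := by
  rintro ⟨f⟩
  let g (s : ℕ) : Option (Fin r × Fin (r - 1)) := if h : s < 2 * r then f ⟨s, h⟩ else none
  have hadj (s : ℕ) (hs : s + 1 < 2 * r) : (spider r).Adj (g s) (g (s + 1)) := by
    simp only [g, dif_pos hs, dif_pos (show s < 2 * r by omega)]
    exact f.toHom.map_adj (by simp [pathGraph_adj])
  have hinj : Set.InjOn g (Set.Iio (2 * r)) := fun s hs t ht hst ↦ by
    simp only [Set.mem_Iio] at hs ht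
    simpa using congrArg Fin.val (f.injective (by simpa [g, hs, ht] using hst))
  have chain_le {a b : ℕ} (hb : b ≤ 2 * r) (hcenter : ∀ s ∈ Set.Ico a b, g s ≠ none) :
      b - a ≤ r - 1 :=
    spider_chain_length_le (fun s _ hs ↦ hadj s (by omega))
      (hinj.mono fun s hs ↦ by simp only [Set.mem_Ico, Set.mem_Iio] at hs ⊢; omega) hcenter
  by_cases hc : ∃ t < 2 * r, g t = none
  · obtain ⟨t, ht, hgt⟩ := hc
    have avoid (s : ℕ) (hs : s < 2 * r) (hst : s ≠ t) : g s ≠ none := fun hgs ↦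
      hst (hinj hs ht (hgs.trans hgt.symm))
    have := chain_le (a := 0) ht.le fun s hs ↦ avoid s (by grind) (by grind)
    have := chain_le (a := t + 1) le_rfl fun s hs ↦ avoid s (by grind) (by grind)
    omega
  · push Not at hc
    have := chain_le (a := 0) le_rfl fun s hs ↦ hc s hs.2
    omega

def spiderDepthOnLeg (m : Fin r) : Option (Fin r × Fin (r - 1)) → ℕ
  | some (m', j) => if m' = m then j + 1 else 0
  | none => 0

lemma spiderDepthOnLeg_le_of_adj (m : Fin r) {x y : Option (Fin r × Fin (r - 1))}
    (h : (spider r).Adj x y) : spiderDepthOnLeg m x ≤ spiderDepthOnLeg m y + 1 := by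
  rcases x with _ | ⟨mx, jx⟩ <;> rcases y with _ | ⟨my, jy⟩ <;>
    simp only [spider_adj_none_none, spider_adj_none_some, spider_adj_some_none,
      spider_adj_some_some] at h <;>
    simp only [spiderDepthOnLeg] <;> grind

lemma spiderDepthOnLeg_le_add_length (m : Fin r) {x y : Option (Fin r × Fin (r - 1))}
    (w : (spider r).Walk x y) : spiderDepthOnLeg m x ≤ spiderDepthOnLeg m y + w.length := by
  induction w with
  | nil => simp
  | cons h _ ih =>
    have := spiderDepthOnLeg_le_of_adj m h
    rw [Walk.length_cons]
    omega

lemma exists_walk_spider_center (m : Fin r) :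
    ∀ (j : ℕ) (hj : j < r - 1), ∃ w : (spider r).Walk (some (m, ⟨j, hj⟩)) none, w.length = j + 1
  | 0, hj => ⟨.cons (by simp) .nil, rfl⟩
  | j + 1, hj =>
    have ⟨w, hw⟩ := exists_walk_spider_center m j (by omega)
    ⟨.cons (by simp) w, by simp [hw]⟩

lemma isBurningSeq_spider_center (hr : 0 < r) :
    IsBurningSeq (spider r) (fun _ : Fin r => none) := by
  rintro (_ | ⟨m, j, hj⟩)
  · exact ⟨⟨0, hr⟩, .nil, by simpa⟩
  · obtain ⟨w, hw⟩ := exists_walk_spider_center m j hj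
    exact ⟨⟨0, hr⟩, w, by simp only [hw]; omega⟩

lemma le_of_isBurningSeq_spider {k : ℕ} {b : Fin k → Option (Fin r × Fin (r - 1))}
    (hb : IsBurningSeq (spider r) b) : r ≤ k := by
  obtain hr | hr := Nat.lt_or_ge r 2
  · obtain ⟨⟨i, hi⟩, -⟩ := hb none
    omega
  by_contra! hk
  choose src w hw using fun m : Fin r ↦ hb (some (m, ⟨r - 2, by omega⟩))
  have src_on_leg (m : Fin r) : (b (src m)).map Prod.fst = some m := by
    have hdepth := spiderDepthOnLeg_le_add_length m (w m)
    have hleaf : spiderDepthOnLeg m (some (m, ⟨r - 2, by omega⟩)) = r - 1 := by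
      simp only [spiderDepthOnLeg, if_pos]
      omega
    have hlen := hw m
    rw [hleaf] at hdepth
    rcases hbm : b (src m) with _ | ⟨m', j⟩ <;> simp only [hbm, spiderDepthOnLeg] at hdepth
    · omega
    · split_ifs at hdepth with h
      · simp [h]
      · omega
  have : Function.Injective src := fun m m' h ↦ by
    simpa [h, src_on_leg m'] using (src_on_leg m).symm
  exact hk.not_ge (by simpa using Fintype.card_le_of_injective src this)

theorem burningNumber_spider (hr : 0 < r) : burningNumber (spider r) = r :=
  le_antisymm (Nat.sInf_le ⟨_, isBurningSeq_spider_center hr⟩)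
    (le_csInf ⟨r, _, isBurningSeq_spider_center hr⟩ fun _ ⟨_, hb⟩ ↦ le_of_isBurningSeq_spider hb)

end Spider

/-- For `r ≥ 2`, the spider `𝔓_r` is `P_{2r}`-free; consequently, for every `k ≥ 4`,
taking `r = ⌊k / 2⌋` gives a `P_k`-free graph whose burning number equals `⌊k / 2⌋`. -/
theorem spider_pathFree_and_burningNumber :
    (∀ r : ℕ, 2 ≤ r → IsEmpty (pathGraph (2 * r) ↪g spider r)) ∧
      (∀ k : ℕ, 4 ≤ k →
        IsEmpty (pathGraph k ↪g spider (k / 2)) ∧ burningNumber (spider (k / 2)) = k / 2) := by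
  have pathFree {r n : ℕ} (hr : 0 < r) (hn : 2 * r ≤ n) : IsEmpty (pathGraph n ↪g spider r) :=
    ⟨fun e ↦ pathGraph_free_spider hr ((pathGraph_isContained_pathGraph hn).trans e.isContained)⟩
  refine ⟨fun r hr ↦ pathFree (by omega) le_rfl, fun k hk ↦ ⟨pathFree (by omega) ?_, ?_⟩⟩
  · omega
  · exact burningNumber_spider (by omega)
end

section
/- Let G̃ be the graph on 16 vertices obtained from the complete bipartite graph K_{4,4} by attaching one pendant vertex to each of its 8 vertices. Then G̃ is P_6-free and b(G̃) = 4 = ⌈(6+1)/2⌉; hence the bound b(G) ≤ ⌈(k+1)/2⌉ for connected P_k-free graphs is tight for k = 6. -/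
open SimpleGraph

/-- The graph `G̃`: the complete bipartite graph `K_{4,4}` with one pendant vertex attached
to each of its `8` vertices. The original vertices are `Sum.inl x` and the pendant vertex
attached to `x` is `Sum.inr x`. -/
def Gtilde : SimpleGraph ((Fin 4 ⊕ Fin 4) ⊕ (Fin 4 ⊕ Fin 4)) :=
  SimpleGraph.fromRel (fun x y =>
    match x, y with
    | Sum.inl u, Sum.inl v => (completeBipartiteGraph (Fin 4) (Fin 4)).Adj u v
    | Sum.inl v, Sum.inr w => v = w
    | _, _ => False)

/-!
`G̃` is the corona `K_{4,4} ⊙ K₁`. In the corona of any graph `H` the inner vertices of an induced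
path have two distinct neighbours, so they are not pendant and form an induced path of `H`; hence
an induced `P₆` in `G̃` would give an induced `P₄` in `K_{4,4}`, whose ends lie on opposite sides
and are therefore adjacent.

Any two vertices of `K_{4,4}` are at distance at most 2, so a single source in the core reaches
every vertex of `G̃` within 3 steps and `b(G̃) ≤ 4`. Given three sources, let `a₀, a₁, a₂` be the
core vertices they are or hang at; some core vertex `x ∉ {a₀, a₁, a₂}` lies on the side of `a₀`,
and the pendant vertex at `x` is at distance at least 3 from the first source and at least 2 from
the other two.
-/

lemma Sum.exists_isLeft_eq_notMem {V W : Type*} [Fintype V] [Fintype W] (s : Finset (V ⊕ W))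
    (hV : s.card < Fintype.card V) (hW : s.card < Fintype.card W) (a : V ⊕ W) :
    ∃ x, x.isLeft = a.isLeft ∧ x ∉ s := by
  rcases a with _ | _
  · obtain ⟨x, hx, hxs⟩ := Finset.exists_mem_notMem_of_card_lt_card
      (t := Finset.univ.map .inl) (by simpa using hV)
    obtain ⟨v, -, rfl⟩ := Finset.mem_map.mp hx
    exact ⟨.inl v, rfl, hxs⟩
  · obtain ⟨x, hx, hxs⟩ := Finset.exists_mem_notMem_of_card_lt_card
      (t := Finset.univ.map .inr) (by simpa using hW)
    obtain ⟨v, -, rfl⟩ := Finset.mem_map.mp hx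
    exact ⟨.inr v, rfl, hxs⟩

namespace SimpleGraph

section Burning

variable {V : Type*} {G : SimpleGraph V}

lemma Walk.eq_or_adj_of_length_le_one {u v : V} (p : G.Walk u v) (hp : p.length ≤ 1) :
    u = v ∨ G.Adj u v := by
  rcases Nat.le_one_iff_eq_zero_or_eq_one.mp hp with h | h
  · exact Or.inl (Walk.eq_of_length_eq_zero h)
  · exact Or.inr (Walk.adj_of_length_eq_one h)

lemma IsBurningSeq.snoc {k : ℕ} {b : Fin k → V} (hb : IsBurningSeq G b) (x : V) :
    IsBurningSeq G (Fin.snoc b x : Fin (k + 1) → V) := by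
  intro v
  obtain ⟨i, w, hw⟩ := hb v
  refine ⟨i.castSucc, w.copy rfl (Fin.snoc_castSucc (α := fun _ => V) x b i).symm, ?_⟩
  simp only [Walk.length_copy, Fin.val_castSucc]
  omega

lemma isBurningSeq_const {k : ℕ} (hk : 0 < k) {c : V}
    (hc : ∀ v, ∃ w : G.Walk v c, w.length < k) : IsBurningSeq G (fun _ : Fin k => c) := by
  intro v
  obtain ⟨w, hw⟩ := hc v
  exact ⟨⟨0, hk⟩, w, hw⟩

lemma burningNumber_eq_succ_iff [Nonempty V] {n : ℕ} :
    burningNumber G = n + 1 ↔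
      (∃ b : Fin (n + 1) → V, IsBurningSeq G b) ∧ ∀ b : Fin n → V, ¬IsBurningSeq G b := by
  refine (Nat.sInf_upward_closed_eq_succ_iff ?_ n).trans (by simp)
  intro k₁ k₂ hk ⟨b, hb⟩
  induction k₂, hk using Nat.le_induction with
  | base => exact ⟨b, hb⟩
  | succ k _ ih =>
    obtain ⟨b', hb'⟩ := ih
    exact ⟨_, hb'.snoc (Classical.arbitrary V)⟩

end Burning

variable {W : Type*}

/-- The corona `H ⊙ K₁`: a pendant vertex `inr w` is attached to every vertex `inl w` of `H`. -/
def corona (H : SimpleGraph W) : SimpleGraph (W ⊕ W) :=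
  fromRel fun x y =>
    match x, y with
    | Sum.inl u, Sum.inl v => H.Adj u v
    | Sum.inl v, Sum.inr w => v = w
    | _, _ => False

namespace corona

variable {H : SimpleGraph W}

def base : W ⊕ W → W := Sum.elim id id

@[simp]
lemma adj_inl_inl {u v : W} : (corona H).Adj (.inl u) (.inl v) ↔ H.Adj u v := by
  simp only [corona, fromRel_adj]
  exact ⟨fun h => h.2.elim id fun h => h.symm, fun h => ⟨by simpa using h.ne, Or.inl h⟩⟩

lemma adj_inr {x : W} {u : W ⊕ W} : (corona H).Adj (.inr x) u ↔ u = .inl x := by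
  cases u <;> simp [corona, eq_comm]

lemma adj_base {u v : W ⊕ W} (h : (corona H).Adj u v) :
    H.Adj (base u) (base v) ∨ base u = base v := by
  rcases u with a | a <;> rcases v with b | b
  · exact Or.inl (adj_inl_inl.mp h)
  · exact Or.inr (adj_inr.mp h.symm ▸ rfl)
  · exact Or.inr (adj_inr.mp h ▸ rfl)
  · simp [adj_inr] at h

def inlHom : H →g corona H where
  toFun := Sum.inl
  map_rel' h := adj_inl_inl.mpr h

lemma exists_walk_base {u v : W ⊕ W} (w : (corona H).Walk u v) :
    ∃ p : H.Walk (base u) (base v), p.length ≤ w.length := by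
  induction w with
  | nil => exact ⟨.nil, le_rfl⟩
  | cons h _ ih =>
    obtain ⟨p, hp⟩ := ih
    rcases adj_base h with h' | h'
    · exact ⟨.cons h' p, by simpa using hp⟩
    · exact ⟨p.copy h'.symm rfl, by rw [Walk.length_copy, Walk.length_cons]; omega⟩

lemma exists_walk_base_of_walk_inr {x : W} {v : W ⊕ W} (w : (corona H).Walk (.inr x) v) :
    ∃ p : H.Walk x (base v), p.length ≤ w.length - 1 := by
  cases w with
  | nil => exact ⟨.nil, Nat.zero_le _⟩
  | cons h w =>
    obtain rfl := adj_inr.mp h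
    obtain ⟨p, hp⟩ := exists_walk_base w
    exact ⟨p, by rw [Walk.length_cons, Nat.add_sub_cancel]; exact hp⟩

lemma exists_walk_to_inl {c : W} {r : ℕ} (hc : ∀ a, ∃ p : H.Walk a c, p.length ≤ r)
    (v : W ⊕ W) : ∃ w : (corona H).Walk v (.inl c), w.length ≤ r + 1 := by
  obtain ⟨p, hp⟩ := hc (base v)
  let q : (corona H).Walk (.inl (base v)) (.inl c) := p.map inlHom
  have hq : q.length ≤ r := (Walk.length_map _ _).trans_le hp
  rcases v with a | a
  · exact ⟨q, hq.trans r.le_succ⟩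
  · exact ⟨.cons (adj_inr.mpr rfl) q, Nat.succ_le_succ hq⟩

lemma exists_eq_inl_of_adj_of_adj {u v₁ v₂ : W ⊕ W} (h₁ : (corona H).Adj u v₁)
    (h₂ : (corona H).Adj u v₂) (hne : v₁ ≠ v₂) : ∃ a, u = .inl a := by
  rcases u with a | x
  · exact ⟨a, rfl⟩
  · exact (hne ((adj_inr.mp h₁).trans (adj_inr.mp h₂).symm)).elim

theorem isEmpty_pathGraph_embedding {n : ℕ} (hH : IsEmpty (pathGraph n ↪g H)) :
    IsEmpty (pathGraph (n + 2) ↪g corona H) := by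
  refine ⟨fun f => hH.false ?_⟩
  have inner (i : Fin n) : ∃ a, f i.succ.castSucc = .inl a := by
    have hl : (pathGraph (n + 2)).Adj i.succ.castSucc i.castSucc.castSucc := by
      simp [pathGraph_adj]
    have hr : (pathGraph (n + 2)).Adj i.succ.castSucc i.succ.succ := by
      simp [pathGraph_adj]
    exact exists_eq_inl_of_adj_of_adj (f.map_adj_iff.mpr hl) (f.map_adj_iff.mpr hr)
      (f.injective.ne (by simp [Fin.ext_iff]; omega))
  choose g hg using inner
  have hadj (i j : Fin n) : H.Adj (g i) (g j) ↔ (pathGraph n).Adj i j := by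
    rw [← adj_inl_inl (H := H), ← hg, ← hg, f.map_adj_iff, pathGraph_adj, pathGraph_adj]
    simp only [Fin.val_castSucc, Fin.val_succ]
    omega
  have hinj : g.Injective := fun i j hij => by
    have := f.injective ((hg i).trans (hij ▸ (hg j).symm))
    simp only [Fin.ext_iff, Fin.val_castSucc, Fin.val_succ] at this
    exact Fin.ext (by omega)
  exact ⟨⟨g, hinj⟩, hadj _ _⟩

end corona

section CompleteBipartite

variable {V : Type*}

lemma completeBipartiteGraph_adj_iff_isLeft_ne {a b : V ⊕ W} :
    (completeBipartiteGraph V W).Adj a b ↔ a.isLeft ≠ b.isLeft := by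
  cases a <;> cases b <;> simp

theorem isEmpty_pathGraph_four_embedding_completeBipartiteGraph :
    IsEmpty (pathGraph 4 ↪g completeBipartiteGraph V W) := by
  refine ⟨fun f => ?_⟩
  have side (i j : Fin 4) (h : i.val + 1 = j.val) : (f i).isLeft ≠ (f j).isLeft :=
    completeBipartiteGraph_adj_iff_isLeft_ne.mp (f.map_adj_iff.mpr (pathGraph_adj.mpr (Or.inl h)))
  have alternate : ∀ a b c d : Bool, a ≠ b → b ≠ c → c ≠ d → a ≠ d := by decide
  have h03 := alternate _ _ _ _ (side 0 1 rfl) (side 1 2 rfl) (side 2 3 rfl)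
  have := f.map_adj_iff.mp (completeBipartiteGraph_adj_iff_isLeft_ne.mpr h03)
  simp [pathGraph_adj] at this

lemma completeBipartiteGraph_exists_walk_length_le_two [Nonempty V] [Nonempty W] (a c : V ⊕ W) :
    ∃ p : (completeBipartiteGraph V W).Walk a c, p.length ≤ 2 := by
  by_cases hac : a.isLeft = c.isLeft
  · let m : V ⊕ W := if a.isLeft then .inr (Classical.arbitrary W) else .inl (Classical.arbitrary V)
    have ham : (completeBipartiteGraph V W).Adj a m := by
      rcases a with _ | _ <;> simp [m]
    have hmc : (completeBipartiteGraph V W).Adj m c := by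
      rcases a with _ | _ <;> rcases c with _ | _ <;> simp_all [m]
    exact ⟨.cons ham (.cons hmc .nil), le_rfl⟩
  · exact ⟨(completeBipartiteGraph_adj_iff_isLeft_ne.mpr hac).toWalk, by simp⟩

open corona in
theorem corona_completeBipartiteGraph_not_isBurningSeq [Fintype V] [Fintype W]
    (hV : 4 ≤ Fintype.card V) (hW : 4 ≤ Fintype.card W) (b : Fin 3 → (V ⊕ W) ⊕ (V ⊕ W)) :
    ¬IsBurningSeq (corona (completeBipartiteGraph V W)) b := by
  classical
  intro hb
  have hcard : (Finset.univ.image (base ∘ b)).card ≤ 3 := Finset.card_image_le.trans (by simp)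
  obtain ⟨x, hside, hx⟩ := Sum.exists_isLeft_eq_notMem (Finset.univ.image (base ∘ b))
    (by omega) (by omega) (base (b 0))
  obtain ⟨i, w, hw⟩ := hb (.inr x)
  obtain ⟨p, hp⟩ := exists_walk_base_of_walk_inr w
  rcases p.eq_or_adj_of_length_le_one (by omega) with h | h
  · exact hx (Finset.mem_image.mpr ⟨i, Finset.mem_univ _, h.symm⟩)
  · obtain rfl : i = 0 := Fin.ext <| by
      by_contra hi
      exact h.ne (Walk.eq_of_length_eq_zero (p := p) (by omega))
    exact completeBipartiteGraph_adj_iff_isLeft_ne.mp h hside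

theorem burningNumber_corona_completeBipartiteGraph [Fintype V] [Fintype W]
    (hV : 4 ≤ Fintype.card V) (hW : 4 ≤ Fintype.card W) :
    burningNumber (corona (completeBipartiteGraph V W)) = 4 := by
  have : Nonempty V := Fintype.card_pos_iff.mp (by omega)
  have : Nonempty W := Fintype.card_pos_iff.mp (by omega)
  let c : V ⊕ W := .inl (Classical.arbitrary V)
  have hc (v) : ∃ w : (corona (completeBipartiteGraph V W)).Walk v (.inl c), w.length < 4 := by
    obtain ⟨w, hw⟩ :=
      corona.exists_walk_to_inl (completeBipartiteGraph_exists_walk_length_le_two · c) v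
    exact ⟨w, by omega⟩
  exact burningNumber_eq_succ_iff.mpr
    ⟨⟨_, isBurningSeq_const (by norm_num) hc⟩, corona_completeBipartiteGraph_not_isBurningSeq hV hW⟩

end CompleteBipartite

end SimpleGraph

lemma Gtilde_eq_corona : Gtilde = corona (completeBipartiteGraph (Fin 4) (Fin 4)) := by
  ext u v
  rcases u with (a | a) | (a | a) <;> rcases v with (b | b) | (b | b) <;> rfl

/-- `G̃` is `P_6`-free and `b(G̃) = 4 = ⌈(6 + 1) / 2⌉`: the bound
`b(G) ≤ ⌈(k + 1) / 2⌉` for connected `P_k`-free graphs is tight for `k = 6`. -/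
theorem Gtilde_pathFree_and_burningNumber :
    IsEmpty (pathGraph 6 ↪g Gtilde) ∧ burningNumber Gtilde = 4 := by
  rw [Gtilde_eq_corona]
  exact ⟨corona.isEmpty_pathGraph_embedding
      isEmpty_pathGraph_four_embedding_completeBipartiteGraph,
    burningNumber_corona_completeBipartiteGraph (by simp) (by simp)⟩
end
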